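/- arXiv:2601.16945 — 9 statements merged into one kernel-verified Lean document; each statement's English description precedes it below -/
import Mathlib

section
/- For λ ∈ ℝ, v ∈ ℝ^(1×m), S ∈ Sym(m) with Ŝ = [[λ, v],[vᵀ, S]] positive definite, and for s > -1/2, the integral ∫_{(0,∞)×ℝ^m} exp(-(t, τ)ᵀ Ŝ (t, τ)) t^{2s} dt dτ equals (1/2) π^{m/2} Γ(s + 1/2) ((det Ŝ)/(det S))^{-(s+1/2)} (det S)^{-1/2}. -/
/-!
Completing the square in `t` (Schur complement) gives
`(t, τ)ᵀ Ŝ (t, τ) = (τ + t u)ᵀ S (τ + t u) + c t²` with `u = S⁻¹ vᵀ`, `c = det Ŝ / det S > 0`.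
For fixed `t` the shift `τ ↦ τ + t u` does not change the Gaussian integral over `τ`, which is
`π^{m/2} (det S)^{-1/2}` after the substitution `τ ↦ S^{1/2} τ`; Fubini then splits off the
one-dimensional integral `∫₀^∞ e^{-c t²} t^{2s} dt = ½ c^{-(s+1/2)} Γ(s + 1/2)`.
-/

open Matrix MeasureTheory
open scoped MatrixOrder

namespace Matrix

variable {ι : Type*} [Fintype ι]

theorem exp_neg_dotProduct_self (y : ι → ℝ) :
    Real.exp (-(y ⬝ᵥ y)) = ∏ i, Real.exp (-y i ^ 2) := by
  simp [← Real.exp_sum, dotProduct, sq]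

theorem integrable_exp_neg_dotProduct_self :
    Integrable fun y : ι → ℝ => Real.exp (-(y ⬝ᵥ y)) := by
  simp_rw [exp_neg_dotProduct_self, volume_pi]
  exact Integrable.fintype_prod (f := fun _ x => Real.exp (-x ^ 2)) fun _ => by
    simpa using integrable_exp_neg_mul_sq one_pos

theorem integral_exp_neg_dotProduct_self :
    ∫ y : ι → ℝ, Real.exp (-(y ⬝ᵥ y)) = Real.pi ^ (Fintype.card ι / 2 : ℝ) := by
  have hgauss : ∫ x : ℝ, Real.exp (-x ^ 2) = √Real.pi := by simpa using integral_gaussian 1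
  simp_rw [exp_neg_dotProduct_self, volume_pi]
  rw [integral_fintype_prod_eq_pow (fun x : ℝ => Real.exp (-x ^ 2)), hgauss, Real.sqrt_eq_rpow,
    ← Real.rpow_natCast, ← Real.rpow_mul Real.pi_pos.le]
  ring_nf

variable [DecidableEq ι]

theorem measurableEmbedding_mulVec {M : Matrix ι ι ℝ} (hM : M.det ≠ 0) :
    MeasurableEmbedding (M *ᵥ ·) := by
  have : Invertible M := M.invertibleOfIsUnitDet (isUnit_iff_ne_zero.mpr hM)
  exact (M.toLinearEquiv' this).toContinuousLinearEquiv.toHomeomorph.measurableEmbedding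

theorem map_mulVec_volume {M : Matrix ι ι ℝ} (hM : M.det ≠ 0) :
    Measure.map (M *ᵥ ·) volume = ENNReal.ofReal |M.det|⁻¹ • volume := by
  rw [← abs_inv]
  exact Real.map_matrix_volume_pi_eq_smul_volume_pi hM

theorem integral_comp_mulVec {E : Type*} [NormedAddCommGroup E] [NormedSpace ℝ E]
    {M : Matrix ι ι ℝ} (hM : M.det ≠ 0) (f : (ι → ℝ) → E) :
    ∫ x, f (M *ᵥ x) = |M.det|⁻¹ • ∫ x, f x := by
  rw [← (measurableEmbedding_mulVec hM).integral_map, map_mulVec_volume hM,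
    integral_smul_measure, ENNReal.toReal_ofReal (by positivity)]

theorem integrable_comp_mulVec_iff {E : Type*} [NormedAddCommGroup E]
    {M : Matrix ι ι ℝ} (hM : M.det ≠ 0) {f : (ι → ℝ) → E} :
    Integrable (fun x => f (M *ᵥ x)) ↔ Integrable f := by
  rw [← Function.comp_def, ← (measurableEmbedding_mulVec hM).integrable_map_iff,
    map_mulVec_volume hM]
  exact integrable_smul_measure (by simpa using hM) ENNReal.ofReal_ne_top

theorem PosSemidef.dotProduct_mulVec_eq_sqrt {S : Matrix ι ι ℝ} (hS : S.PosSemidef)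
    (x : ι → ℝ) : x ⬝ᵥ S *ᵥ x = (CFC.sqrt S *ᵥ x) ⬝ᵥ (CFC.sqrt S *ᵥ x) := by
  conv_lhs => rw [← CFC.sqrt_mul_sqrt_self S hS.nonneg]
  rw [← mulVec_mulVec, dotProduct_mulVec, ← mulVec_transpose,
    ← conjTranspose_eq_transpose_of_trivial, (CFC.sqrt_nonneg S).posSemidef.isHermitian.eq]

theorem PosDef.integrable_exp_neg_dotProduct_mulVec {S : Matrix ι ι ℝ} (hS : S.PosDef) :
    Integrable fun x : ι → ℝ => Real.exp (-(x ⬝ᵥ S *ᵥ x)) := by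
  have hdet : (CFC.sqrt S).det ≠ 0 := by
    simpa [hS.posSemidef.det_sqrt] using (Real.sqrt_pos.2 hS.det_pos).ne'
  simp_rw [hS.posSemidef.dotProduct_mulVec_eq_sqrt]
  exact (integrable_comp_mulVec_iff hdet).2 integrable_exp_neg_dotProduct_self

theorem PosDef.integral_exp_neg_dotProduct_mulVec {S : Matrix ι ι ℝ} (hS : S.PosDef) :
    ∫ x : ι → ℝ, Real.exp (-(x ⬝ᵥ S *ᵥ x))
      = Real.pi ^ (Fintype.card ι / 2 : ℝ) * S.det ^ (-(1 / 2) : ℝ) := by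
  have hdet : (CFC.sqrt S).det = √S.det := by simpa using hS.posSemidef.det_sqrt
  simp_rw [hS.posSemidef.dotProduct_mulVec_eq_sqrt]
  rw [integral_comp_mulVec (hdet ▸ (Real.sqrt_pos.2 hS.det_pos).ne')
      (fun y => Real.exp (-(y ⬝ᵥ y))), integral_exp_neg_dotProduct_self, hdet,
    abs_of_nonneg (Real.sqrt_nonneg _), Real.sqrt_eq_rpow, ← Real.rpow_neg hS.det_pos.le,
    smul_eq_mul, mul_comm]

theorem sumElim_dotProduct_fromBlocks_mulVec_sumElim (A : Matrix (Fin 1) (Fin 1) ℝ)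
    (v : Matrix (Fin 1) ι ℝ) {S : Matrix ι ι ℝ} (hS : S.IsHermitian) (hdet : S.det ≠ 0)
    (t : ℝ) (x : ι → ℝ) :
    Sum.elim (fun _ => t) x ⬝ᵥ fromBlocks A v vᵀ S *ᵥ Sum.elim (fun _ => t) x
      = (x + t • ((S⁻¹ * vᵀ) *ᵥ 1)) ⬝ᵥ S *ᵥ (x + t • ((S⁻¹ * vᵀ) *ᵥ 1))
        + (fromBlocks A v vᵀ S).det / S.det * t ^ 2 := by
  have : Invertible S := S.invertibleOfIsUnitDet (isUnit_iff_ne_zero.mpr hdet)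
  have hschur := schur_complement_eq₂₂ A v (fun _ => t) x hS
  rw [conjTranspose_eq_transpose_of_trivial] at hschur
  simp only [star_trivial, ← dotProduct_mulVec] at hschur
  have hshift : (S⁻¹ * vᵀ) *ᵥ (fun _ => t) = t • ((S⁻¹ * vᵀ) *ᵥ 1) := by
    rw [← mulVec_smul]
    congr 1
    ext
    simp
  have hcorner : (fun _ => t) ⬝ᵥ (A - v * S⁻¹ * vᵀ) *ᵥ (fun _ => t)
      = (A - v * S⁻¹ * vᵀ) 0 0 * t ^ 2 := by
    simp only [dotProduct, mulVec, Finset.univ_unique, Fin.default_eq_zero, Finset.sum_singleton]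
    ring
  rw [hschur, hshift, hcorner, add_comm _ x, det_fromBlocks₂₂, invOf_eq_nonsing_inv,
    mul_div_cancel_left₀ _ hdet, det_fin_one]

end Matrix

theorem integral_integral_comp_add_smul_mul {E : Type*} [NormedAddCommGroup E]
    [NormedSpace ℝ E] [MeasurableSpace E] [BorelSpace E] [SecondCountableTopology E]
    {μ : Measure E} [μ.IsAddRightInvariant] [SFinite μ] {ν : Measure ℝ} [SFinite ν]
    {g : E → ℝ} (hg : Integrable g μ) (hgm : StronglyMeasurable g) {K : ℝ → ℝ}
    (hK : Integrable K ν) (u : E) :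
    ∫ x, ∫ t, g (x + t • u) * K t ∂ν ∂μ = (∫ x, g x ∂μ) * ∫ t, K t ∂ν := by
  have hshift : Measurable fun p : E × ℝ => p.1 + p.2 • u :=
    (continuous_fst.add (continuous_snd.smul continuous_const)).measurable
  have hF : Integrable (fun p : E × ℝ => g (p.1 + p.2 • u) * K p.2) (μ.prod ν) := by
    refine (integrable_prod_iff' ((hgm.comp_measurable hshift).aestronglyMeasurable.mul
      hK.aestronglyMeasurable.comp_snd)).2 ⟨.of_forall fun t => ?_, ?_⟩
    · exact (hg.comp_add_right (t • u)).mul_const (K t)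
    · simp only [Pi.mul_apply, Function.comp_apply, norm_mul]
      simp_rw [integral_mul_const, integral_add_right_eq_self (fun x => ‖g x‖)]
      exact hK.norm.const_mul _
  rw [integral_integral_swap hF]
  simp_rw [integral_mul_const, integral_add_right_eq_self g, integral_const_mul]

theorem integrableOn_exp_neg_mul_sq_mul_rpow_Ioi {c : ℝ} (hc : 0 < c) {q : ℝ} (hq : -1 < q) :
    IntegrableOn (fun t : ℝ => Real.exp (-(c * t ^ 2)) * t ^ q) (Set.Ioi 0) :=
  (integrableOn_rpow_mul_exp_neg_mul_sq hc hq).congr_fun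
    (fun t _ => by beta_reduce; rw [neg_mul, mul_comm]) measurableSet_Ioi

theorem integral_exp_neg_mul_sq_mul_rpow_two_mul_Ioi {c : ℝ} (hc : 0 < c) {s : ℝ}
    (hs : -1 / 2 < s) :
    ∫ t in Set.Ioi (0 : ℝ), Real.exp (-(c * t ^ 2)) * t ^ (2 * s)
      = c ^ (-(s + 1 / 2)) * (1 / 2) * Real.Gamma (s + 1 / 2) := by
  have h := integral_rpow_mul_exp_neg_mul_rpow two_pos (by linarith : -1 < 2 * s) hc
  rw [show -(2 * s + 1) / 2 = -(s + 1 / 2) by ring, show (2 * s + 1) / 2 = s + 1 / 2 by ring] at h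
  rw [← h]
  refine setIntegral_congr_fun measurableSet_Ioi fun t _ => ?_
  rw [Real.rpow_two, neg_mul, mul_comm]

theorem stmt1_general {m : ℕ} (l : ℝ) (v : Matrix (Fin 1) (Fin m) ℝ)
    (S : Matrix (Fin m) (Fin m) ℝ)
    (Shat : Matrix (Fin 1 ⊕ Fin m) (Fin 1 ⊕ Fin m) ℝ)
    (hShat : Shat = Matrix.fromBlocks (Matrix.of fun _ _ => l : Matrix (Fin 1) (Fin 1) ℝ) v vᵀ S)
    (hPD : Shat.PosDef) (s : ℝ) (hs : -1/2 < s) :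
    (∫ τ : Fin m → ℝ, ∫ t in Set.Ioi (0 : ℝ),
        Real.exp (-((Sum.elim (fun _ => t) τ) ⬝ᵥ (Shat *ᵥ (Sum.elim (fun _ => t) τ))))
          * t ^ (2 * s))
      = (1/2) * Real.pi ^ ((m : ℝ) / 2) * Real.Gamma (s + 1/2) *
          (Shat.det / S.det) ^ (-(s + 1/2)) * S.det ^ (-(1/2 : ℝ)) := by
  have hSpd : S.PosDef := by subst hShat; exact hPD.submatrix Sum.inr_injective
  set c := Shat.det / S.det
  have hc : 0 < c := div_pos hPD.det_pos hSpd.det_pos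
  set u := (S⁻¹ * vᵀ) *ᵥ (1 : Fin 1 → ℝ)
  have hsplit (τ : Fin m → ℝ) (t : ℝ) :
      Real.exp (-((Sum.elim (fun _ => t) τ) ⬝ᵥ (Shat *ᵥ (Sum.elim (fun _ => t) τ))))
          * t ^ (2 * s)
        = Real.exp (-((τ + t • u) ⬝ᵥ S *ᵥ (τ + t • u)))
          * (Real.exp (-(c * t ^ 2)) * t ^ (2 * s)) := by
    rw [hShat, sumElim_dotProduct_fromBlocks_mulVec_sumElim _ v hSpd.isHermitian hSpd.det_pos.ne',
      ← hShat, neg_add, Real.exp_add, mul_assoc]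
  simp_rw [hsplit]
  rw [integral_integral_comp_add_smul_mul hSpd.integrable_exp_neg_dotProduct_mulVec
      (by fun_prop : Continuous _).stronglyMeasurable
      (integrableOn_exp_neg_mul_sq_mul_rpow_Ioi hc (by linarith)),
    hSpd.integral_exp_neg_dotProduct_mulVec, integral_exp_neg_mul_sq_mul_rpow_two_mul_Ioi hc hs,
    Fintype.card_fin]
  ring

/-- For `Ŝ = [[λ, v],[vᵀ, S]]` positive definite and `s > -1/2`,
`∫_{(0,∞)×ℝ^m} exp(-(t,τ)ᵀ Ŝ (t,τ)) t^{2s} dt dτ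
  = (1/2) π^{m/2} Γ(s+1/2) (det Ŝ / det S)^{-(s+1/2)} (det S)^{-1/2}`. -/
theorem stmt1 {m : ℕ} (l : ℝ) (v : Matrix (Fin 1) (Fin m) ℝ)
    (S : Matrix (Fin m) (Fin m) ℝ) (hS : S.IsSymm)
    (Shat : Matrix (Fin 1 ⊕ Fin m) (Fin 1 ⊕ Fin m) ℝ)
    (hShat : Shat = Matrix.fromBlocks (Matrix.of fun _ _ => l : Matrix (Fin 1) (Fin 1) ℝ) v vᵀ S)
    (hPD : Shat.PosDef) (s : ℝ) (hs : -1/2 < s) :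
    (∫ τ : Fin m → ℝ, ∫ t in Set.Ioi (0 : ℝ),
        Real.exp (-((Sum.elim (fun _ => t) τ) ⬝ᵥ (Shat *ᵥ (Sum.elim (fun _ => t) τ))))
          * t ^ (2 * s))
      = (1/2) * Real.pi ^ ((m : ℝ) / 2) * Real.Gamma (s + 1/2) *
          (Shat.det / S.det) ^ (-(s + 1/2)) * S.det ^ (-(1/2 : ℝ)) :=
  stmt1_general l v S Shat hShat hPD s hs
end

section
/- Let G be a finite simple graph with a subgroup Γ ≤ Aut(G) inducing an orbit coloring, and suppose Γ restricted to each vertex orbit is generously transitive. Then for any vertices v,w in the same Γ-orbit, m_{v→w} = m_{w→v} (the 2-path function is symmetric in its endpoints). -/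
/-! An automorphism `σ ∈ Γ` preserves adjacency, the orbit order and the colors of extended
edges, so it maps the set of 2-paths `v → u → w` counted by `m_{v→w}(k, h)` bijectively onto
the set of 2-paths `σ v → σ u → σ w`. Generous transitivity provides `σ ∈ Γ` swapping `v`
and `w`, which turns the first set into the one counted by `m_{w→v}(k, h)`. -/

namespace OrbitColoring

variable {V : Type*} (G : SimpleGraph V) (Γ : Subgroup (Equiv.Perm V)) (ord : V → ℕ)

/-- The color of an extended edge: its orbit under `Γ`. -/
def edgeColor (e : Sym2 V) : Set (Sym2 V) :=
  {e' | ∃ π ∈ Γ, Sym2.map π e = e'}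

/-- The vertices `u` counted by `m_{v→w}(k, h)`; `ord` ranks the vertex orbits in the fixed
ordering. -/
def twoPathSet (v w : V) (k h : Set (Sym2 V)) : Set V :=
  {u | ord u ≤ min (ord v) (ord w) ∧ (v = u ∨ G.Adj v u) ∧ (u = w ∨ G.Adj u w) ∧
    edgeColor Γ s(v, u) = k ∧ edgeColor Γ s(u, w) = h}

variable {Γ}

theorem edgeColor_map {π : Equiv.Perm V} (hπ : π ∈ Γ) (e : Sym2 V) :
    edgeColor Γ (Sym2.map π e) = edgeColor Γ e := by
  ext e'
  simp only [edgeColor, Set.mem_ofPred_eq, Sym2.map_map]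
  constructor
  · rintro ⟨τ, hτ, rfl⟩
    exact ⟨τ * π, mul_mem hτ hπ, rfl⟩
  · rintro ⟨τ, hτ, rfl⟩
    refine ⟨τ * π⁻¹, mul_mem hτ (inv_mem hπ), ?_⟩
    simp [Function.comp_def]

variable {G ord}

theorem apply_mem_twoPathSet_iff {σ : Equiv.Perm V} (hσ : σ ∈ Γ)
    (hAdj : ∀ u v, G.Adj (σ u) (σ v) ↔ G.Adj u v) (hord : ∀ u, ord (σ u) = ord u)
    {u v w : V} {k h : Set (Sym2 V)} :
    σ u ∈ twoPathSet G Γ ord (σ v) (σ w) k h ↔ u ∈ twoPathSet G Γ ord v w k h := by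
  have hmap : ∀ a b : V, s(σ a, σ b) = Sym2.map σ s(a, b) := fun _ _ => rfl
  simp only [twoPathSet, Set.mem_ofPred_eq, hord, hAdj, σ.injective.eq_iff, hmap,
    edgeColor_map hσ]

theorem ncard_twoPathSet_apply {σ : Equiv.Perm V} (hσ : σ ∈ Γ)
    (hAdj : ∀ u v, G.Adj (σ u) (σ v) ↔ G.Adj u v) (hord : ∀ u, ord (σ u) = ord u)
    (v w : V) (k h : Set (Sym2 V)) :
    (twoPathSet G Γ ord (σ v) (σ w) k h).ncard = (twoPathSet G Γ ord v w k h).ncard := by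
  have himage : σ '' twoPathSet G Γ ord v w k h = twoPathSet G Γ ord (σ v) (σ w) k h := by
    ext x
    rw [← σ.apply_symm_apply x, σ.injective.mem_set_image,
      apply_mem_twoPathSet_iff hσ hAdj hord]
  rw [← himage, Set.ncard_image_of_injective _ σ.injective]

end OrbitColoring

theorem stmt8_general {V : Type*}
    (G : SimpleGraph V) (Γ : Subgroup (Equiv.Perm V))
    (hAut : ∀ σ ∈ Γ, ∀ u v : V, G.Adj (σ u) (σ v) ↔ G.Adj u v)
    (hGenTrans : ∀ v w : V, (∃ σ ∈ Γ, σ v = w) → v ≠ w →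
      ∃ σ ∈ Γ, σ v = w ∧ σ w = v)
    (ord : V → ℕ)
    (hordConst : ∀ σ ∈ Γ, ∀ v : V, ord (σ v) = ord v)
    (v w : V) (horb : ∃ σ ∈ Γ, σ v = w) :
    ∀ k h : Set (Sym2 V),
      Set.ncard {u : V | ord u ≤ min (ord v) (ord w) ∧
          (v = u ∨ G.Adj v u) ∧ (u = w ∨ G.Adj u w) ∧
          {e : Sym2 V | ∃ π ∈ Γ, Sym2.map π s(v, u) = e} = k ∧
          {e : Sym2 V | ∃ π ∈ Γ, Sym2.map π s(u, w) = e} = h}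
        = Set.ncard {u : V | ord u ≤ min (ord w) (ord v) ∧
          (w = u ∨ G.Adj w u) ∧ (u = v ∨ G.Adj u v) ∧
          {e : Sym2 V | ∃ π ∈ Γ, Sym2.map π s(w, u) = e} = k ∧
          {e : Sym2 V | ∃ π ∈ Γ, Sym2.map π s(u, v) = e} = h} := by
  intro k h
  change (OrbitColoring.twoPathSet G Γ ord v w k h).ncard =
    (OrbitColoring.twoPathSet G Γ ord w v k h).ncard
  rcases eq_or_ne v w with rfl | hvw
  · rfl
  obtain ⟨σ, hσ, hσv, hσw⟩ := hGenTrans v w horb hvw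
  have := OrbitColoring.ncard_twoPathSet_apply hσ (hAut σ hσ) (hordConst σ hσ) v w k h
  rwa [hσv, hσw, eq_comm] at this

/-- Let `Γ ≤ Aut(G)` induce the orbit coloring of extended edges, with
`Γ` generously transitive on each vertex orbit. Then for vertices `v, w` in the same
orbit, the 2-path function is symmetric in its endpoints: `m_{v→w} = m_{w→v}`.
Colors of extended edges are encoded by their Γ-orbits in `Sym2 V`; `ord : V → ℕ`
encodes the fixed ordering of the vertex orbits. -/
theorem stmt8 {V : Type*} [Fintype V] [DecidableEq V]
    (G : SimpleGraph V) (Γ : Subgroup (Equiv.Perm V))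
    (hAut : ∀ σ ∈ Γ, ∀ u v : V, G.Adj (σ u) (σ v) ↔ G.Adj u v)
    (hGenTrans : ∀ v w : V, (∃ σ ∈ Γ, σ v = w) → v ≠ w →
      ∃ σ ∈ Γ, σ v = w ∧ σ w = v)
    (ord : V → ℕ)
    (hordConst : ∀ σ ∈ Γ, ∀ v : V, ord (σ v) = ord v)
    (hordSep : ∀ v w : V, ord v = ord w → ∃ σ ∈ Γ, σ v = w)
    (v w : V) (horb : ∃ σ ∈ Γ, σ v = w) :
    ∀ k h : Set (Sym2 V),
      Set.ncard {u : V | ord u ≤ min (ord v) (ord w) ∧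
          (v = u ∨ G.Adj v u) ∧ (u = w ∨ G.Adj u w) ∧
          {e : Sym2 V | ∃ π ∈ Γ, Sym2.map π s(v, u) = e} = k ∧
          {e : Sym2 V | ∃ π ∈ Γ, Sym2.map π s(u, w) = e} = h}
        = Set.ncard {u : V | ord u ≤ min (ord w) (ord v) ∧
          (w = u ∨ G.Adj w u) ∧ (u = v ∨ G.Adj u v) ∧
          {e : Sym2 V | ∃ π ∈ Γ, Sym2.map π s(w, u) = e} = k ∧
          {e : Sym2 V | ∃ π ∈ Γ, Sym2.map π s(u, v) = e} = h} :=
  stmt8_general G Γ hAut hGenTrans ord hordConst v w horb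
end

section
/- Let G be a finite simple graph with a cyclic subgroup Γ = ⟨τ⟩ ≤ Aut(G) acting transitively on a vertex orbit V_i of size n. Then for any v, w ∈ V_i and any pair of colors (k,h) of extended edges within V_i, the number of u ∈ V_i with c(v,u)=k and c(u,w)=h equals the number of u ∈ V_i with c(w,u)=k and c(u,v)=h. -/
/-!
Write `w = a • v`. Because `Γ` is commutative, `g • v ↦ (a * g⁻¹) • v` is a well-defined
involution of the orbit of `v`, and it carries each path `v — u — w` to a path `w — u' — v`
with the same colours: `a * g⁻¹` moves the edge `{v, u}` onto `{u', w}`, and `g⁻¹` moves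
`{u, w}` onto `{v, u'}`.
-/

open MulAction

namespace MulAction

variable {Γ α : Type*} [CommGroup Γ] [MulAction Γ α] {P Q : α → α → Prop}

theorem inv_smul_eq_inv_smul_of_smul_eq {g g' : Γ} {v : α} (h : g • v = g' • v) :
    g⁻¹ • v = g'⁻¹ • v := by
  calc g⁻¹ • v = g⁻¹ • g'⁻¹ • g' • v := by rw [inv_smul_smul]
    _ = g'⁻¹ • g⁻¹ • g • v := by rw [← h, smul_comm]
    _ = g'⁻¹ • v := by rw [inv_smul_smul]

variable (hP : ∀ (g : Γ) x y, P x y → P (g • x) (g • y)) (hPs : ∀ x y, P x y → P y x)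
  (hQ : ∀ (g : Γ) x y, Q x y → Q (g • x) (g • y)) (hQs : ∀ x y, Q x y → Q y x)
include hP hPs hQ hQs

theorem reflect_mem_of_mem (a g : Γ) (v : α) (h : P v (g • v) ∧ Q (g • v) (a • v)) :
    P (a • v) ((a * g⁻¹) • v) ∧ Q ((a * g⁻¹) • v) v :=
  ⟨hPs _ _ (by simpa [smul_smul] using hP (a * g⁻¹) _ _ h.1),
    hQs _ _ (by simpa [smul_smul, mul_comm] using hQ g⁻¹ _ _ h.2)⟩

theorem ncard_orbit_path_eq_ncard_orbit_path_reverse {v w : α} (hw : w ∈ orbit Γ v) :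
    {u | u ∈ orbit Γ v ∧ P v u ∧ Q u w}.ncard = {u | u ∈ orbit Γ v ∧ P w u ∧ Q u v}.ncard := by
  obtain ⟨a, rfl⟩ := mem_orbit_iff.1 hw
  refine Set.ncard_congr (fun u hu => (a * (mem_orbit_iff.1 hu.1).choose⁻¹) • v) ?_ ?_ ?_
  · intro u hu
    rw [← (mem_orbit_iff.1 hu.1).choose_spec] at hu
    exact ⟨mem_orbit _ _, reflect_mem_of_mem hP hPs hQ hQs a _ v hu.2⟩
  · intro u u' hu hu' h
    rw [← (mem_orbit_iff.1 hu.1).choose_spec, ← (mem_orbit_iff.1 hu'.1).choose_spec]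
    have h' := inv_smul_eq_inv_smul_of_smul_eq
      ((smul_left_cancel_iff a).1 (by simpa [mul_smul] using h))
    rwa [inv_inv, inv_inv] at h'
  · rintro _ ⟨⟨b, rfl⟩, hPQ⟩
    have hpre := reflect_mem_of_mem hP hPs hQ hQs a⁻¹ (b * a⁻¹) (a • v)
      (by simpa [smul_smul] using hPQ)
    refine ⟨(a * b⁻¹) • v, ⟨mem_orbit _ _, by simpa [smul_smul, mul_comm] using hpre⟩, ?_⟩
    have hc := inv_smul_eq_inv_smul_of_smul_eq
      (mem_orbit_iff.1 (mem_orbit v (a * b⁻¹))).choose_spec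
    change (a * _) • v = b • v
    rw [mul_smul, hc, smul_smul, mul_inv_rev, inv_inv, mul_comm b, mul_inv_cancel_left]

end MulAction

namespace Equiv.Perm

variable {α : Type*} {σ : Perm α}

theorem rel_zpow_apply_iff {r : α → α → Prop} (h : ∀ x y, r (σ x) (σ y) ↔ r x y) (t : ℤ)
    (x y : α) : r ((σ ^ t) x) ((σ ^ t) y) ↔ r x y := by
  induction t using Int.induction_on generalizing x y with
  | zero => simp
  | succ n ih => rw [zpow_add_one, mul_apply, mul_apply, ih, h]
  | pred n ih =>
    rw [zpow_sub_one, mul_apply, mul_apply, ih]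
    simpa using (h (σ⁻¹ x) (σ⁻¹ y)).symm

theorem mem_orbit_zpowers_iff {v u : α} :
    u ∈ orbit (Subgroup.zpowers σ) v ↔ ∃ t : ℤ, (σ ^ t) v = u := by
  rw [mem_orbit_iff, Subgroup.exists_zpowers]
  rfl

open scoped IsMulCommutative in
theorem ncard_orbit_path_eq_ncard_orbit_path_reverse {P Q : α → α → Prop}
    (hP : ∀ (t : ℤ) x y, P x y → P ((σ ^ t) x) ((σ ^ t) y)) (hPs : ∀ x y, P x y → P y x)
    (hQ : ∀ (t : ℤ) x y, Q x y → Q ((σ ^ t) x) ((σ ^ t) y)) (hQs : ∀ x y, Q x y → Q y x)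
    {v w : α} (hw : ∃ t : ℤ, (σ ^ t) v = w) :
    {u | (∃ t : ℤ, (σ ^ t) v = u) ∧ P v u ∧ Q u w}.ncard =
      {u | (∃ t : ℤ, (σ ^ t) v = u) ∧ P w u ∧ Q u v}.ncard := by
  have hzpowers {R : α → α → Prop} (hR : ∀ (t : ℤ) x y, R x y → R ((σ ^ t) x) ((σ ^ t) y))
      (g : Subgroup.zpowers σ) (x y : α) (hxy : R x y) : R (g • x) (g • y) := by
    obtain ⟨_, t, rfl⟩ := g
    exact hR t x y hxy
  simpa only [mem_orbit_zpowers_iff] using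
    MulAction.ncard_orbit_path_eq_ncard_orbit_path_reverse (hzpowers hP) hPs (hzpowers hQ) hQs
      (mem_orbit_zpowers_iff.2 hw)

end Equiv.Perm

namespace SimpleGraph

variable {V : Type*} (G : SimpleGraph V) (τ : Equiv.Perm V)

def sym2Orbit (e : Sym2 V) : Set (Sym2 V) := {e' | ∃ t : ℤ, Sym2.map (τ ^ t) e = e'}

theorem sym2Orbit_map_zpow (t : ℤ) (e : Sym2 V) :
    sym2Orbit τ (Sym2.map (τ ^ t) e) = sym2Orbit τ e := by
  ext e'
  constructor
  · rintro ⟨r, rfl⟩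
    exact ⟨r + t, by rw [Sym2.map_map, ← Equiv.Perm.coe_mul, ← zpow_add]⟩
  · rintro ⟨r, rfl⟩
    exact ⟨r - t, by rw [Sym2.map_map, ← Equiv.Perm.coe_mul, ← zpow_add, sub_add_cancel]⟩

/-- The paper's `c(x, y) = k`: `{x, y}` is an extended edge (an edge or a loop) whose
`⟨τ⟩`-orbit is `k`. -/
def HasOrbitColor (k : Set (Sym2 V)) (x y : V) : Prop :=
  (x = y ∨ G.Adj x y) ∧ sym2Orbit τ s(x, y) = k

variable {G τ}

theorem HasOrbitColor.symm {k : Set (Sym2 V)} {x y : V} (h : G.HasOrbitColor τ k x y) :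
    G.HasOrbitColor τ k y x :=
  ⟨h.1.imp Eq.symm fun hxy => hxy.symm, Sym2.eq_swap ▸ h.2⟩

theorem HasOrbitColor.zpow_apply (hAut : ∀ u v : V, G.Adj (τ u) (τ v) ↔ G.Adj u v)
    {k : Set (Sym2 V)} {x y : V} (h : G.HasOrbitColor τ k x y) (t : ℤ) :
    G.HasOrbitColor τ k ((τ ^ t) x) ((τ ^ t) y) := by
  obtain ⟨hxy, hk⟩ := h
  refine ⟨hxy.imp (congrArg _) (Equiv.Perm.rel_zpow_apply_iff hAut t x y).2, ?_⟩
  rw [← Sym2.map_mk, sym2Orbit_map_zpow, hk]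

end SimpleGraph

theorem stmt9_general {V : Type*}
    (G : SimpleGraph V) (τ : Equiv.Perm V)
    (hAut : ∀ u v : V, G.Adj (τ u) (τ v) ↔ G.Adj u v)
    (v w : V) (horb : ∃ t : ℤ, (τ ^ t) v = w) :
    ∀ k h : Set (Sym2 V),
      Set.ncard {u : V | (∃ t : ℤ, (τ ^ t) v = u) ∧
          (v = u ∨ G.Adj v u) ∧ (u = w ∨ G.Adj u w) ∧
          {e : Sym2 V | ∃ t : ℤ, Sym2.map (τ ^ t) s(v, u) = e} = k ∧
          {e : Sym2 V | ∃ t : ℤ, Sym2.map (τ ^ t) s(u, w) = e} = h}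
        = Set.ncard {u : V | (∃ t : ℤ, (τ ^ t) v = u) ∧
          (w = u ∨ G.Adj w u) ∧ (u = v ∨ G.Adj u v) ∧
          {e : Sym2 V | ∃ t : ℤ, Sym2.map (τ ^ t) s(w, u) = e} = k ∧
          {e : Sym2 V | ∃ t : ℤ, Sym2.map (τ ^ t) s(u, v) = e} = h} := by
  intro k h
  have key := Equiv.Perm.ncard_orbit_path_eq_ncard_orbit_path_reverse
    (P := G.HasOrbitColor τ k) (Q := G.HasOrbitColor τ h)
    (fun t _ _ hxy => hxy.zpow_apply hAut t) (fun _ _ => SimpleGraph.HasOrbitColor.symm)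
    (fun t _ _ hxy => hxy.zpow_apply hAut t) (fun _ _ => SimpleGraph.HasOrbitColor.symm) horb
  convert key using 2 <;> ext u <;>
    simp only [Set.mem_ofPred_eq, SimpleGraph.HasOrbitColor, SimpleGraph.sym2Orbit] <;> tauto

/-- Let `Γ = ⟨τ⟩` be a cyclic group of automorphisms of `G`, coloring
extended edges by orbits, and let `v, w` lie in a common `τ`-orbit `O`. Then for any
pair of colors `(k, h)` (encoded as `⟨τ⟩`-orbits in `Sym2 V`), the number of `u ∈ O`
with `c(v,u) = k` and `c(u,w) = h` equals the number of `u ∈ O` with `c(w,u) = k`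
and `c(u,v) = h`. -/
theorem stmt9 {V : Type*} [Fintype V] [DecidableEq V]
    (G : SimpleGraph V) (τ : Equiv.Perm V)
    (hAut : ∀ u v : V, G.Adj (τ u) (τ v) ↔ G.Adj u v)
    (v w : V) (horb : ∃ t : ℤ, (τ ^ t) v = w) :
    ∀ k h : Set (Sym2 V),
      Set.ncard {u : V | (∃ t : ℤ, (τ ^ t) v = u) ∧
          (v = u ∨ G.Adj v u) ∧ (u = w ∨ G.Adj u w) ∧
          {e : Sym2 V | ∃ t : ℤ, Sym2.map (τ ^ t) s(v, u) = e} = k ∧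
          {e : Sym2 V | ∃ t : ℤ, Sym2.map (τ ^ t) s(u, w) = e} = h}
        = Set.ncard {u : V | (∃ t : ℤ, (τ ^ t) v = u) ∧
          (w = u ∨ G.Adj w u) ∧ (u = v ∨ G.Adj u v) ∧
          {e : Sym2 V | ∃ t : ℤ, Sym2.map (τ ^ t) s(w, u) = e} = k ∧
          {e : Sym2 V | ∃ t : ℤ, Sym2.map (τ ^ t) s(u, v) = e} = h} :=
  stmt9_general G τ hAut v w horb
end

section
/- Let G = (V,E) be a finite decomposable graph and Γ ≤ Aut(G). Given a perfect elimination ordering (v_{σ₁},…,v_{σ_p}) of G, define η₁ = c(v_{σ₁}) and inductively η_k = c(v_k) where v_k is the first vertex in the peo lying outside V_{η₁} ∪ … ∪ V_{η_{k-1}}, with c(v) the Γ-orbit of v. Then the resulting ordered partition (V_{η₁},…,V_{η_r}) of V into Γ-orbits is a color perfect elimination ordering. -/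
/-!
Let `v` be a vertex whose orbit first appears at peo position `k = f v`, say
`v = π (σ k)` with `π ∈ Γ`. Since `π` is an automorphism, `σ` followed by `π` is again a
perfect elimination ordering, and in it `v` sits at position `k`, while every `w` with
`f v ≤ f w` sits at position `σ⁻¹ (π⁻¹ w) ≥ f (π⁻¹ w) = f w ≥ k`, because `f` is constant
on orbits. So `v` is simplicial among those vertices.
-/

namespace SimpleGraph

variable {V W : Type*} {p : ℕ}

def IsPerfectEliminationOrder (G : SimpleGraph V) (σ : Fin p ≃ V) : Prop :=
  ∀ k l l' : Fin p, k ≤ l → k ≤ l' → σ l ≠ σ l' →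
    G.Adj (σ k) (σ l) → G.Adj (σ k) (σ l') → G.Adj (σ l) (σ l')

theorem IsPerfectEliminationOrder.map_iso {G : SimpleGraph V} {H : SimpleGraph W}
    {σ : Fin p ≃ V} (hσ : G.IsPerfectEliminationOrder σ) (φ : G ≃g H) :
    H.IsPerfectEliminationOrder (σ.trans φ.toEquiv) := by
  intro k l l' hl hl' hne hadj hadj'
  exact φ.map_adj_iff.mpr <| hσ k l l' hl hl' (fun h => hne (congrArg φ h))
    (φ.map_adj_iff.mp hadj) (φ.map_adj_iff.mp hadj')

end SimpleGraph

section OrbitPositions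

variable {V : Type*} {p : ℕ} (Γ : Subgroup (Equiv.Perm V)) (σ : Fin p ≃ V)

def orbitPositions (v : V) : Set ℕ :=
  {t : ℕ | ∃ ht : t < p, ∃ π ∈ Γ, π (σ ⟨t, ht⟩) = v}

theorem val_symm_mem_orbitPositions (v : V) : (σ.symm v : ℕ) ∈ orbitPositions Γ σ v :=
  ⟨(σ.symm v).isLt, 1, Γ.one_mem, by simp⟩

theorem orbitPositions_apply {π : Equiv.Perm V} (hπ : π ∈ Γ) (v : V) :
    orbitPositions Γ σ (π v) = orbitPositions Γ σ v := by
  ext t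
  constructor
  · rintro ⟨ht, ρ, hρ, hρv⟩
    exact ⟨ht, π⁻¹ * ρ, Γ.mul_mem (Γ.inv_mem hπ) hρ, by simp [hρv]⟩
  · rintro ⟨ht, ρ, hρ, hρv⟩
    exact ⟨ht, π * ρ, Γ.mul_mem hπ hρ, by simp [hρv]⟩

theorem sInf_orbitPositions_le {π : Equiv.Perm V} (hπ : π ∈ Γ) (v : V) :
    sInf (orbitPositions Γ σ v) ≤ σ.symm (π v) := by
  rw [← orbitPositions_apply Γ σ hπ v]
  exact Nat.sInf_le (val_symm_mem_orbitPositions Γ σ (π v))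

theorem sInf_orbitPositions_mem (v : V) :
    sInf (orbitPositions Γ σ v) ∈ orbitPositions Γ σ v :=
  Nat.sInf_mem ⟨_, val_symm_mem_orbitPositions Γ σ v⟩

end OrbitPositions

theorem stmt10_general {V : Type*}
    (G : SimpleGraph V) (Γ : Subgroup (Equiv.Perm V))
    (hAut : ∀ π ∈ Γ, ∀ u v : V, G.Adj (π u) (π v) ↔ G.Adj u v)
    (p : ℕ) (σ : Fin p ≃ V)
    (hpeo : ∀ k l l' : Fin p, k ≤ l → k ≤ l' → σ l ≠ σ l' →
      G.Adj (σ k) (σ l) → G.Adj (σ k) (σ l') → G.Adj (σ l) (σ l'))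
    (f : V → ℕ)
    (hf : ∀ v : V, f v = sInf {t : ℕ | ∃ ht : t < p, ∃ π ∈ Γ, π (σ ⟨t, ht⟩) = v}) :
    ∀ v w w' : V, f v ≤ f w → f v ≤ f w' → w ≠ w' →
      G.Adj v w → G.Adj v w' → G.Adj w w' := by
  intro v w w' hvw hvw' hne hadj hadj'
  obtain ⟨hv, π, hπ, hπv⟩ : f v ∈ orbitPositions Γ σ v := hf v ▸ sInf_orbitPositions_mem Γ σ v
  let φ : G ≃g G := ⟨π, hAut π hπ _ _⟩
  set τ := σ.trans φ.toEquiv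
  have hτ : G.IsPerfectEliminationOrder τ := SimpleGraph.IsPerfectEliminationOrder.map_iso hpeo φ
  have hτv : τ ⟨f v, hv⟩ = v := hπv
  have hpos : ∀ u, f v ≤ f u → ⟨f v, hv⟩ ≤ τ.symm u := fun u hu =>
    hu.trans ((hf u).trans_le (sInf_orbitPositions_le Γ σ (Γ.inv_mem hπ) u))
  simpa using hτ ⟨f v, hv⟩ (τ.symm w) (τ.symm w') (hpos w hvw) (hpos w' hvw') (by simpa)
    (by simpa [hτv]) (by simpa [hτv])

/-- Let `G` be a finite (decomposable) graph, `Γ ≤ Aut(G)`, and let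
`(v_{σ₁},…,v_{σ_p})` (encoded by `σ : Fin p ≃ V`) be a perfect elimination ordering
of `G`. Order the Γ-orbits by first appearance in the peo: `f v` is the least peo
index of a vertex in the orbit of `v`. Then the resulting ordered partition of `V`
into Γ-orbits is a color perfect elimination ordering: every vertex `v` is simplicial
in the subgraph induced by the orbits appearing no earlier than its own. -/
theorem stmt10 {V : Type*} [Fintype V] [DecidableEq V]
    (G : SimpleGraph V) (Γ : Subgroup (Equiv.Perm V))
    (hAut : ∀ π ∈ Γ, ∀ u v : V, G.Adj (π u) (π v) ↔ G.Adj u v)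
    (p : ℕ) (hp : Fintype.card V = p) (σ : Fin p ≃ V)
    (hpeo : ∀ k l l' : Fin p, k ≤ l → k ≤ l' → σ l ≠ σ l' →
      G.Adj (σ k) (σ l) → G.Adj (σ k) (σ l') → G.Adj (σ l) (σ l'))
    (f : V → ℕ)
    (hf : ∀ v : V, f v = sInf {t : ℕ | ∃ ht : t < p, ∃ π ∈ Γ, π (σ ⟨t, ht⟩) = v}) :
    ∀ v w w' : V, f v ≤ f w → f v ≤ f w' → w ≠ w' →
      G.Adj v w → G.Adj v w' → G.Adj w w' :=
  stmt10_general G Γ hAut p σ hpeo f hf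
end

section
/- Let (G, 𝒞) be a colored graph with basis matrices J^k (indicator matrices of color classes of extended edges), block structure given by an ordering of vertex color classes, and let BlockTri denote taking the block lower triangular part. Then for all extended edges {v,w} and all colors k,h: [BlockTri(J^k) · BlockTri(J^h)ᵀ]_{vw} = m_{v→w}(k,h). -/
open Matrix

/-- Block lower triangular part with respect to the ordering of vertex color
classes encoded by `ord`. -/
def BlockTri {V : Type*} (ord : V → ℕ) (x : Matrix V V ℝ) : Matrix V V ℝ :=
  Matrix.of fun v u => if ord u ≤ ord v then x v u else 0

theorem BlockTri_mul_transpose_apply {V : Type*} [Fintype V] (ord : V → ℕ)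
    (A B : Matrix V V ℝ) (v w : V) :
    (BlockTri ord A * (BlockTri ord B)ᵀ) v w =
      ∑ u ∈ Finset.univ.filter (fun u => ord u ≤ min (ord v) (ord w)), A v u * B w u := by
  rw [Matrix.mul_apply, Finset.sum_filter]
  refine Finset.sum_congr rfl fun u _ => ?_
  simp only [BlockTri, transpose_apply, of_apply, le_min_iff]
  exact ite_zero_mul_ite_zero _ _ _ _

theorem stmt11_general {V : Type*} [Fintype V]
    (col : V → V → ℕ) (ord : V → ℕ)
    (hsym : ∀ v w : V, col v w = col w v)
    (J : ℕ → Matrix V V ℝ)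
    (hJ : ∀ k, ∀ v w : V, J k v w = if col v w = k then 1 else 0)
    (v w : V) (k h : ℕ) :
    (BlockTri ord (J k) * (BlockTri ord (J h))ᵀ) v w =
      ((Finset.univ.filter fun u : V =>
          ord u ≤ min (ord v) (ord w) ∧ col v u = k ∧ col u w = h).card : ℝ) := by
  have indicator_product (u : V) :
      J k v u * J h w u = if col v u = k ∧ col u w = h then 1 else 0 := by
    rw [hJ, hJ, hsym w u, ite_zero_mul_ite_zero, one_mul]
  simp only [BlockTri_mul_transpose_apply, indicator_product, Finset.sum_boole,
    Finset.filter_filter]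

/-- For a colored graph with extended-edge coloring `col` (value `0`
on non-edges), vertex-class ordering `ord` (classes = loop colors), and indicator
basis matrices `J k`, we have, for every extended edge `{v,w}` and all colors `k, h`:
`[BlockTri(J^k) · BlockTri(J^h)ᵀ]_{vw} = m_{v→w}(k,h)`. -/
theorem stmt11 {V : Type*} [Fintype V] [DecidableEq V]
    (G : SimpleGraph V) (col : V → V → ℕ) (ord : V → ℕ)
    (hsym : ∀ v w : V, col v w = col w v)
    (hcol0 : ∀ v w : V, col v w = 0 ↔ ¬(v = w ∨ G.Adj v w))
    (hord : ∀ v w : V, ord v = ord w ↔ col v v = col w w)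
    (J : ℕ → Matrix V V ℝ)
    (hJ : ∀ k, ∀ v w : V, J k v w = if col v w = k then 1 else 0)
    (v w : V) (hvw : v = w ∨ G.Adj v w) (k h : ℕ) (hk : k ≠ 0) (hh : h ≠ 0) :
    (BlockTri ord (J k) * (BlockTri ord (J h))ᵀ) v w =
      ((Finset.univ.filter fun u : V =>
          ord u ≤ min (ord v) (ord w) ∧ col v u = k ∧ col u w = h).card : ℝ) :=
  stmt11_general col ord hsym J hJ v w k h
end

section
/- Let (G,𝒞) be a 2-path regular colored graph with respect to some ordering of vertex color classes, and let F_i be the set of extended-edge colors occurring between vertices of color class V_i. If k ∈ F_i and c(v',w') = k for some extended edge {v',w'}, then both v' and w' lie in V_i. -/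
/-- The 2-path count `m_{v→w}(k,h)`: the number of vertices `u` in a color class no
later than those of `v` and `w` with `c(v,u) = k` and `c(u,w) = h`. -/
def mfun {V : Type*} [Fintype V] [DecidableEq V] (col : V → V → ℕ) (ord : V → ℕ)
    (v w : V) (k h : ℕ) : ℕ :=
  (Finset.univ.filter fun u : V =>
    ord u ≤ min (ord v) (ord w) ∧ col v u = k ∧ col u w = h).card

/-- The symmetrized 2-path count `m_{v↔w}(k,h) = m_{v→w}(k,h) + m_{v→w}(h,k)`. -/
def msym {V : Type*} [Fintype V] [DecidableEq V] (col : V → V → ℕ) (ord : V → ℕ)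
    (v w : V) (k h : ℕ) : ℕ :=
  mfun col ord v w k h + mfun col ord v w h k

/-!
Vertex colors are never colors of proper edges, so a 2-path `v, u, w` whose first step
carries a vertex color must have `u = v`, and one whose last step does must have `u = w`.
Hence for an edge `{v,w}` with `v, w ∈ V_i` the value `m_{v↔w}(c(v,v), c(v,w))` is `2`,
the maximum possible, and it is `2` at `{v',w'}` only if both `v'` and `w'` have the
vertex color `c(v,v)`. Condition (M1) transports the value `2` from `{v,w}` to `{v',w'}`.
-/

section VertexColor

variable {V : Type*} [Fintype V] [DecidableEq V] {col : V → V → ℕ} {ord : V → ℕ}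

theorem mfun_vertexColor_left (hloop : ∀ u v w : V, v ≠ w → col v w ≠ col u u)
    (v w x : V) (h : ℕ) :
    mfun col ord v w (col x x) h =
      if ord v ≤ ord w ∧ col v v = col x x ∧ col v w = h then 1 else 0 := by
  have : (Finset.univ.filter fun u : V =>
      ord u ≤ min (ord v) (ord w) ∧ col v u = col x x ∧ col u w = h) =
      ({v} : Finset V).filter fun u => ord v ≤ ord w ∧ col v u = col x x ∧ col u w = h := by
    ext u
    simp only [Finset.mem_filter, Finset.mem_univ, true_and, Finset.mem_singleton]
    constructor
    · rintro ⟨hu, hvu, huw⟩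
      obtain rfl : u = v := by_contra fun hne => hloop x v u (Ne.symm hne) hvu
      exact ⟨rfl, le_min_iff.mp hu |>.2, hvu, huw⟩
    · rintro ⟨rfl, hvw, hvu, huw⟩
      exact ⟨le_min le_rfl hvw, hvu, huw⟩
  rw [mfun, this, Finset.filter_singleton]
  split_ifs <;> rfl

theorem mfun_vertexColor_right (hloop : ∀ u v w : V, v ≠ w → col v w ≠ col u u)
    (v w x : V) (k : ℕ) :
    mfun col ord v w k (col x x) =
      if ord w ≤ ord v ∧ col v w = k ∧ col w w = col x x then 1 else 0 := by
  have : (Finset.univ.filter fun u : V =>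
      ord u ≤ min (ord v) (ord w) ∧ col v u = k ∧ col u w = col x x) =
      ({w} : Finset V).filter fun u => ord w ≤ ord v ∧ col v u = k ∧ col u w = col x x := by
    ext u
    simp only [Finset.mem_filter, Finset.mem_univ, true_and, Finset.mem_singleton]
    constructor
    · rintro ⟨hu, hvu, huw⟩
      obtain rfl : u = w := by_contra fun hne => hloop x u w hne huw
      exact ⟨rfl, le_min_iff.mp hu |>.1, hvu, huw⟩
    · rintro ⟨rfl, hwv, hvu, huw⟩
      exact ⟨le_min hwv le_rfl, hvu, huw⟩
  rw [mfun, this, Finset.filter_singleton]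
  split_ifs <;> rfl

theorem msym_vertexColor_edgeColor_eq_two_iff
    (hloop : ∀ u v w : V, v ≠ w → col v w ≠ col u u) (v w x : V) :
    msym col ord v w (col x x) (col v w) = 2 ↔
      ord v = ord w ∧ col v v = col x x ∧ col w w = col x x := by
  rw [msym, mfun_vertexColor_left hloop, mfun_vertexColor_right hloop]
  simp only [and_true, true_and]
  constructor
  · intro h2
    split_ifs at h2 with h₁ h₂
    · exact ⟨le_antisymm h₁.1 h₂.1, h₁.2, h₂.2⟩
    all_goals omega
  · rintro ⟨hvw, hv, hw⟩
    rw [if_pos ⟨hvw.le, hv⟩, if_pos ⟨hvw.ge, hw⟩]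

end VertexColor

theorem stmt12_general {V : Type*} [Fintype V] [DecidableEq V]
    (G : SimpleGraph V) (col : V → V → ℕ) (ord : V → ℕ)
    (hord : ∀ v w : V, ord v = ord w ↔ col v v = col w w)
    (hloop : ∀ u v w : V, v ≠ w → col v w ≠ col u u)
    (hM1 : ∀ v w v' w' : V, (v = w ∨ G.Adj v w) → (v' = w' ∨ G.Adj v' w') →
      col v w = col v' w' →
      ∀ k h : ℕ, msym col ord v w k h = msym col ord v' w' k h)
    (v w : V) (hvw : v = w ∨ G.Adj v w) (hclass : col v v = col w w)
    (v' w' : V) (hvw' : v' = w' ∨ G.Adj v' w') (hcc : col v' w' = col v w) :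
    col v' v' = col v v ∧ col w' w' = col v v := by
  have hvw_two : msym col ord v w (col v v) (col v w) = 2 :=
    (msym_vertexColor_edgeColor_eq_two_iff hloop v w v).mpr
      ⟨(hord v w).mpr hclass, rfl, hclass.symm⟩
  have hvw'_two : msym col ord v' w' (col v v) (col v' w') = 2 := by
    rw [hcc, ← hM1 v w v' w' hvw hvw' hcc.symm, hvw_two]
  exact ((msym_vertexColor_edgeColor_eq_two_iff hloop v' w' v).mp hvw'_two).2

/-- In a 2-path regular colored graph (condition (M1) for the given
ordering of vertex color classes), if `k ∈ F_i` — i.e. `k = c(v,w)` for some extended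
edge `{v,w}` with both endpoints of vertex color `i` — and `c(v',w') = k` for some
extended edge `{v',w'}`, then both `v'` and `w'` have vertex color `i`. -/
theorem stmt12 {V : Type*} [Fintype V] [DecidableEq V]
    (G : SimpleGraph V) (col : V → V → ℕ) (ord : V → ℕ)
    (hsym : ∀ v w : V, col v w = col w v)
    (hcol0 : ∀ v w : V, col v w = 0 ↔ ¬(v = w ∨ G.Adj v w))
    (hord : ∀ v w : V, ord v = ord w ↔ col v v = col w w)
    (hloop : ∀ u v w : V, v ≠ w → col v w ≠ col u u)
    (hM1 : ∀ v w v' w' : V, (v = w ∨ G.Adj v w) → (v' = w' ∨ G.Adj v' w') →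
      col v w = col v' w' →
      ∀ k h : ℕ, msym col ord v w k h = msym col ord v' w' k h)
    (v w : V) (hvw : v = w ∨ G.Adj v w) (hclass : col v v = col w w)
    (v' w' : V) (hvw' : v' = w' ∨ G.Adj v' w') (hcc : col v' w' = col v w) :
    col v' v' = col v v ∧ col w' w' = col v v :=
  stmt12_general G col ord hord hloop hM1 v w hvw hclass v' w' hvw' hcc
end

section
/- Let (G,𝒞) be a 2-path regular colored graph (condition M1 with respect to a given ordering of vertex color classes). If c(v,w) = c(v',w') is a color not in F (i.e., a color connecting distinct vertex color classes), with c(v) ≤ c(w) and c(v') ≤ c(w'), then c(v) = c(v'). -/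
section TwoPathCounts

variable {V : Type*} [Fintype V] [DecidableEq V] (col : V → V → ℕ) (ord : V → ℕ)

theorem mfun_pos_iff {v w : V} {k h : ℕ} :
    0 < mfun col ord v w k h ↔
      ∃ u, ord u ≤ min (ord v) (ord w) ∧ col v u = k ∧ col u w = h := by
  simp [mfun, Finset.card_pos, Finset.filter_nonempty_iff]

theorem mfun_loop_pos {v w : V} (hvw : ord v ≤ ord w) :
    0 < mfun col ord v w (col v v) (col v w) :=
  (mfun_pos_iff col ord).mpr ⟨v, le_min le_rfl hvw, rfl, rfl⟩

theorem msym_pos_iff {v w : V} {k h : ℕ} :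
    0 < msym col ord v w k h ↔ 0 < mfun col ord v w k h ∨ 0 < mfun col ord v w h k :=
  add_pos_iff

variable {col ord}

theorem ord_eq_of_mfun_pos_loop_left
    (hord : ∀ v w : V, ord v = ord w ↔ col v v = col w w)
    (hloop : ∀ u v w : V, v ≠ w → col v w ≠ col u u)
    {a v w : V} {h : ℕ} (hpos : 0 < mfun col ord v w (col a a) h) :
    ord a = ord v := by
  obtain ⟨u, -, hvu, -⟩ := (mfun_pos_iff col ord).mp hpos
  obtain rfl : v = u := (hloop a v u).mtr hvu
  exact (hord a v).mpr hvu.symm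

theorem ord_le_of_mfun_pos_loop_right
    (hloop : ∀ u v w : V, v ≠ w → col v w ≠ col u u)
    {a v w : V} {k : ℕ} (hpos : 0 < mfun col ord v w k (col a a)) :
    ord w ≤ ord v := by
  obtain ⟨u, hu, -, huw⟩ := (mfun_pos_iff col ord).mp hpos
  obtain rfl : u = w := (hloop a u w).mtr huw
  exact hu.trans (min_le_left _ _)

end TwoPathCounts

theorem stmt13_general {V : Type*} [Fintype V] [DecidableEq V]
    (G : SimpleGraph V) (col : V → V → ℕ) (ord : V → ℕ)
    (hord : ∀ v w : V, ord v = ord w ↔ col v v = col w w)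
    (hloop : ∀ u v w : V, v ≠ w → col v w ≠ col u u)
    (hM1 : ∀ v w v' w' : V, (v = w ∨ G.Adj v w) → (v' = w' ∨ G.Adj v' w') →
      col v w = col v' w' →
      ∀ k h : ℕ, msym col ord v w k h = msym col ord v' w' k h)
    (v w v' w' : V) (hvw : v = w ∨ G.Adj v w) (hvw' : v' = w' ∨ G.Adj v' w')
    (hcc : col v w = col v' w')
    (hF : ∀ a b : V, (a = b ∨ G.Adj a b) → col a a = col b b → col a b ≠ col v w)
    (h1 : ord v ≤ ord w) (h2 : ord v' ≤ ord w') :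
    ord v = ord v' := by
  have hsym_pos : 0 < msym col ord v' w' (col v v) (col v w) := by
    rw [← hM1 v w v' w' hvw hvw' hcc, msym_pos_iff]
    exact Or.inl (mfun_loop_pos col ord h1)
  rcases (msym_pos_iff col ord).mp hsym_pos with hpos | hpos
  · exact ord_eq_of_mfun_pos_loop_left hord hloop hpos
  · have hclass : ord v' = ord w' :=
      le_antisymm h2 (ord_le_of_mfun_pos_loop_right hloop hpos)
    exact absurd hcc.symm (hF v' w' hvw' ((hord v' w').mp hclass))

/-- In a 2-path regular colored graph (M1), if `c(v,w) = c(v',w')` is a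
color not in `F` (no extended edge of this color joins two vertices of the same vertex
color class), with `c(v) ≤ c(w)` and `c(v') ≤ c(w')` (class indices via `ord`), then
`c(v) = c(v')`. -/
theorem stmt13 {V : Type*} [Fintype V] [DecidableEq V]
    (G : SimpleGraph V) (col : V → V → ℕ) (ord : V → ℕ)
    (hsym : ∀ v w : V, col v w = col w v)
    (hcol0 : ∀ v w : V, col v w = 0 ↔ ¬(v = w ∨ G.Adj v w))
    (hord : ∀ v w : V, ord v = ord w ↔ col v v = col w w)
    (hloop : ∀ u v w : V, v ≠ w → col v w ≠ col u u)
    (hM1 : ∀ v w v' w' : V, (v = w ∨ G.Adj v w) → (v' = w' ∨ G.Adj v' w') →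
      col v w = col v' w' →
      ∀ k h : ℕ, msym col ord v w k h = msym col ord v' w' k h)
    (v w v' w' : V) (hvw : v = w ∨ G.Adj v w) (hvw' : v' = w' ∨ G.Adj v' w')
    (hcc : col v w = col v' w')
    (hF : ∀ a b : V, (a = b ∨ G.Adj a b) → col a a = col b b → col a b ≠ col v w)
    (h1 : ord v ≤ ord w) (h2 : ord v' ≤ ord w') :
    ord v = ord v' :=
  stmt13_general G col ord hord hloop hM1 v w v' w' hvw hvw' hcc hF h1 h2
end

section
/- If (G,𝒞) is a CER colored graph (has a cpeo with respect to which M1 holds) with vertices relabeled according to the cpeo, then the colored matrix space 𝒵_G^𝒞 satisfies (Z1): for every x ∈ 𝒵_G^𝒞, BlockTri(x)·BlockTri(x)ᵀ ∈ 𝒵_G^𝒞. -/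
/-!
Write `L = BlockTri x`. The entry `(L Lᵀ) v w` is the sum of `x v u * x u w` over the vertices
`u` in classes not later than those of `v` and `w`. On a non-edge `v w` every such term vanishes,
since `u` adjacent to both would make `v w` an edge by the color perfect elimination property.
Since non-edges are exactly the pairs of color `0`, `x` is a function `f` of the color; grouping
the terms by the colors `(k, h)` of `(v u, u w)` gives `(L Lᵀ) v w = ∑ m_{v→w}(k,h) f k f h`.
Symmetrizing in `(k, h)` replaces `m_{v→w}` by `m_{v↔w}`, and (M1) makes this constant on color
classes.
-/

open Matrix

/-- The colored matrix space `𝒵_G^𝒞`: symmetric matrices that vanish on non-edges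
and are constant on color classes of extended edges. -/
def ZSet {V : Type*} (G : SimpleGraph V) (col : V → V → ℕ) : Set (Matrix V V ℝ) :=
  {x | x.IsSymm ∧ (∀ v w : V, ¬(v = w ∨ G.Adj v w) → x v w = 0) ∧
    ∀ v w v' w' : V, (v = w ∨ G.Adj v w) → (v' = w' ∨ G.Adj v' w') →
      col v w = col v' w' → x v w = x v' w'}

open Finset

theorem Finset.sum_eq_sum_sum_card_filter_nsmul {ι α β M : Type*} [AddCommMonoid M]
    [DecidableEq α] [DecidableEq β] {s : Finset ι} {A : Finset α} {B : Finset β}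
    {a : ι → α} {b : ι → β} (ha : ∀ i ∈ s, a i ∈ A) (hb : ∀ i ∈ s, b i ∈ B) (F : α → β → M) :
    ∑ i ∈ s, F (a i) (b i) = ∑ k ∈ A, ∑ h ∈ B, #{i ∈ s | a i = k ∧ b i = h} • F k h := by
  rw [← sum_fiberwise_of_maps_to ha]
  refine sum_congr rfl fun k _ => ?_
  rw [← sum_fiberwise_of_maps_to (s := s.filter (a · = k)) fun i hi => hb i (mem_filter.1 hi).1]
  refine sum_congr rfl fun h _ => ?_
  rw [filter_filter, ← sum_const]
  refine sum_congr rfl fun i hi => ?_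
  obtain ⟨rfl, rfl⟩ := (mem_filter.1 hi).2
  rfl

section ColoredMatrixSpace

variable {V : Type*} {G : SimpleGraph V} {col : V → V → ℕ} {x : Matrix V V ℝ}

theorem ZSet.apply_eq_of_col_eq (hcol0 : ∀ v w : V, col v w = 0 ↔ ¬(v = w ∨ G.Adj v w))
    (hx : x ∈ ZSet G col) {v w v' w' : V} (hc : col v w = col v' w') : x v w = x v' w' := by
  obtain ⟨-, hx0, hxc⟩ := hx
  by_cases he : v = w ∨ G.Adj v w
  · have he' : v' = w' ∨ G.Adj v' w' := by
      by_contra he'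
      exact (hcol0 v w).1 (hc.trans ((hcol0 v' w').2 he')) he
    exact hxc v w v' w' he he' hc
  · have he' : ¬(v' = w' ∨ G.Adj v' w') := (hcol0 v' w').1 (hc ▸ (hcol0 v w).2 he)
    rw [hx0 v w he, hx0 v' w' he']

theorem ZSet.exists_apply_eq_comp_col (hcol0 : ∀ v w : V, col v w = 0 ↔ ¬(v = w ∨ G.Adj v w))
    (hx : x ∈ ZSet G col) : ∃ f : ℕ → ℝ, ∀ v w, x v w = f (col v w) := by
  have hfac : (fun p : V × V => x p.1 p.2).FactorsThrough (Function.uncurry col) :=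
    fun _ _ hpq => ZSet.apply_eq_of_col_eq hcol0 hx hpq
  exact ⟨Function.extend (Function.uncurry col) (fun p => x p.1 p.2) 0,
    fun v w => (hfac.extend_apply 0 (v, w)).symm⟩

end ColoredMatrixSpace

section BlockTri

variable {V : Type*} [Fintype V] {ord : V → ℕ}

theorem blockTri_mul_transpose_apply (x : Matrix V V ℝ) (v w : V) :
    (BlockTri ord x * (BlockTri ord x)ᵀ) v w =
      ∑ u with ord u ≤ min (ord v) (ord w), x v u * x w u := by
  rw [mul_apply, sum_filter]
  refine sum_congr rfl fun u _ => ?_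
  simp only [BlockTri, transpose_apply, of_apply, le_min_iff]
  split_ifs <;> simp_all

theorem blockTri_mul_transpose_apply_of_not_adj {G : SimpleGraph V} {x : Matrix V V ℝ}
    (hcpeo : ∀ v w w' : V, ord v ≤ ord w → ord v ≤ ord w' → w ≠ w' →
      G.Adj v w → G.Adj v w' → G.Adj w w')
    (hx0 : ∀ v w : V, ¬(v = w ∨ G.Adj v w) → x v w = 0)
    {v w : V} (hvw : ¬(v = w ∨ G.Adj v w)) :
    (BlockTri ord x * (BlockTri ord x)ᵀ) v w = 0 := by
  rw [blockTri_mul_transpose_apply]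
  refine sum_eq_zero fun u hu => ?_
  obtain ⟨huv, huw⟩ := le_min_iff.1 (mem_filter.1 hu).2
  by_contra hne
  obtain ⟨hxv, hxw⟩ := mul_ne_zero_iff.1 hne
  have hev : v = u ∨ G.Adj v u := not_imp_comm.1 (hx0 v u) hxv
  have hew : w = u ∨ G.Adj w u := not_imp_comm.1 (hx0 w u) hxw
  rcases hev with rfl | hav
  · exact hvw (hew.imp Eq.symm G.adj_symm)
  rcases hew with rfl | haw
  · exact hvw (Or.inr hav)
  exact hvw (Or.inr (hcpeo u v w huv huw (fun h => hvw (Or.inl h)) hav.symm haw.symm))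

variable [DecidableEq V] {col : V → V → ℕ} {f : ℕ → ℝ}

theorem blockTri_mul_transpose_apply_eq_sum_mfun {x : Matrix V V ℝ} (hxs : x.IsSymm)
    (hf : ∀ v w, x v w = f (col v w)) (v w : V) :
    (BlockTri ord x * (BlockTri ord x)ᵀ) v w =
      ∑ k ∈ univ.image (Function.uncurry col), ∑ h ∈ univ.image (Function.uncurry col),
        (mfun col ord v w k h : ℝ) * (f k * f h) := by
  have hmem : ∀ p : V × V, Function.uncurry col p ∈ univ.image (Function.uncurry col) :=
    fun p => mem_image_of_mem _ (mem_univ p)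
  rw [blockTri_mul_transpose_apply]
  simp_rw [← hxs.apply w, hf]
  rw [sum_eq_sum_sum_card_filter_nsmul (a := fun u => col v u) (b := fun u => col u w)
    (fun u _ => hmem (v, u)) (fun u _ => hmem (u, w)) fun k h => f k * f h]
  simp only [nsmul_eq_mul, mfun, filter_filter]

theorem two_mul_blockTri_mul_transpose_apply {x : Matrix V V ℝ} (hxs : x.IsSymm)
    (hf : ∀ v w, x v w = f (col v w)) (v w : V) :
    2 * (BlockTri ord x * (BlockTri ord x)ᵀ) v w =
      ∑ k ∈ univ.image (Function.uncurry col), ∑ h ∈ univ.image (Function.uncurry col),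
        (msym col ord v w k h : ℝ) * (f k * f h) := by
  conv_lhs =>
    rw [two_mul]; enter [2]; rw [blockTri_mul_transpose_apply_eq_sum_mfun hxs hf, sum_comm]
  rw [blockTri_mul_transpose_apply_eq_sum_mfun hxs hf, ← sum_add_distrib]
  refine sum_congr rfl fun k _ => ?_
  rw [← sum_add_distrib]
  refine sum_congr rfl fun h _ => ?_
  rw [msym, Nat.cast_add]
  ring

end BlockTri

theorem stmt14_general {V : Type*} [Fintype V] [DecidableEq V]
    (G : SimpleGraph V) (col : V → V → ℕ) (ord : V → ℕ)
    (hcol0 : ∀ v w : V, col v w = 0 ↔ ¬(v = w ∨ G.Adj v w))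
    (hcpeo : ∀ v w w' : V, ord v ≤ ord w → ord v ≤ ord w' → w ≠ w' →
      G.Adj v w → G.Adj v w' → G.Adj w w')
    (hM1 : ∀ v w v' w' : V, (v = w ∨ G.Adj v w) → (v' = w' ∨ G.Adj v' w') →
      col v w = col v' w' →
      ∀ k h : ℕ, msym col ord v w k h = msym col ord v' w' k h) :
    ∀ x ∈ ZSet G col, BlockTri ord x * (BlockTri ord x)ᵀ ∈ ZSet G col := by
  intro x hx
  obtain ⟨f, hf⟩ := ZSet.exists_apply_eq_comp_col hcol0 hx
  refine ⟨isSymm_mul_transpose_self _,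
    fun v w hvw => blockTri_mul_transpose_apply_of_not_adj hcpeo hx.2.1 hvw,
    fun v w v' w' he he' hc => ?_⟩
  refine mul_left_cancel₀ (two_ne_zero (α := ℝ)) ?_
  simp only [two_mul_blockTri_mul_transpose_apply hx.1 hf, hM1 v w v' w' he he' hc]

/-- If `(G,𝒞)` is a CER colored graph — it admits a color perfect
elimination ordering `ord` with respect to which 2-path regularity (M1) holds — then
the colored matrix space `𝒵_G^𝒞` satisfies (Z1):
for every `x ∈ 𝒵_G^𝒞`, `BlockTri(x)·BlockTri(x)ᵀ ∈ 𝒵_G^𝒞`. -/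
theorem stmt14 {V : Type*} [Fintype V] [DecidableEq V]
    (G : SimpleGraph V) (col : V → V → ℕ) (ord : V → ℕ)
    (hsym : ∀ v w : V, col v w = col w v)
    (hcol0 : ∀ v w : V, col v w = 0 ↔ ¬(v = w ∨ G.Adj v w))
    (hord : ∀ v w : V, ord v = ord w ↔ col v v = col w w)
    (hloop : ∀ u v w : V, v ≠ w → col v w ≠ col u u)
    (hcpeo : ∀ v w w' : V, ord v ≤ ord w → ord v ≤ ord w' → w ≠ w' →
      G.Adj v w → G.Adj v w' → G.Adj w w')
    (hM1 : ∀ v w v' w' : V, (v = w ∨ G.Adj v w) → (v' = w' ∨ G.Adj v' w') →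
      col v w = col v' w' →
      ∀ k h : ℕ, msym col ord v w k h = msym col ord v' w' k h) :
    ∀ x ∈ ZSet G col, BlockTri ord x * (BlockTri ord x)ᵀ ∈ ZSet G col :=
  stmt14_general G col ord hcol0 hcpeo hM1
end

section
/- If (G,𝒞) is a symmetric CER graph (M1 and M2 hold with respect to a cpeo), then for every vertex color class V_i and all diagonal-block colors k,h ∈ F_i, the indicator matrices commute: J^k J^h = J^h J^k. -/
/-!
By symmetry of the coloring each `J^k` is a symmetric matrix, so `J^k` and `J^h`
commute iff `J^k J^h` is symmetric, i.e. iff the number of `(k,h)`-colored 2-paths from `v` to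
`w` equals that from `w` to `v`. A color `k ∈ F_i` only joins vertices of `V_i` (by (M1) and the
2-path counts through the loops at the endpoints of a `k`-edge), so such 2-paths stay inside
`V_i`, where they are exactly the 2-paths counted by (M2). -/

open Matrix

/-- The indicator matrix `J^k` of a color class of extended edges. -/
def Jmat {V : Type*} [DecidableEq V] (col : V → V → ℕ) (k : ℕ) : Matrix V V ℝ :=
  Matrix.of fun v w => if col v w = k then 1 else 0

/-- `k` belongs to `F`, the set of extended-edge colors joining two vertices of the
same vertex color class. -/
def memF {V : Type*} (G : SimpleGraph V) (col : V → V → ℕ) (k : ℕ) : Prop :=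
  ∃ a b : V, (a = b ∨ G.Adj a b) ∧ col a a = col b b ∧ col a b = k

open Finset

lemma Matrix.commute_of_isSymm_of_isSymm_mul {n α : Type*} [Fintype n] [CommSemiring α]
    {A B : Matrix n n α} (hA : A.IsSymm) (hB : B.IsSymm) (hAB : (A * B).IsSymm) :
    Commute A B := by
  calc A * B = (A * B)ᵀ := hAB.symm
    _ = B * A := by rw [transpose_mul, hA.eq, hB.eq]

lemma Jmat_isSymm {V : Type*} [DecidableEq V] {col : V → V → ℕ}
    (hsym : ∀ v w, col v w = col w v) (k : ℕ) : (Jmat col k).IsSymm :=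
  IsSymm.ext fun v w => by simp only [Jmat, of_apply, hsym v w]

lemma eq_of_col_eq_col_diag {V : Type*} {col : V → V → ℕ}
    (hloop : ∀ u v w : V, v ≠ w → col v w ≠ col u u) {u x y : V} (hxy : col x y = col u u) :
    x = y :=
  by_contra fun hne => hloop u x y hne hxy

section TwoPaths

variable {V : Type*} [Fintype V] [DecidableEq V] {col : V → V → ℕ}

lemma Jmat_mul_apply (k h : ℕ) (v w : V) :
    (Jmat col k * Jmat col h) v w = (#{u | col v u = k ∧ col u w = h} : ℝ) := by
  rw [mul_apply, card_filter]
  push_cast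
  refine sum_congr rfl fun u _ => ?_
  by_cases h₁ : col v u = k <;> by_cases h₂ : col u w = h <;> simp [Jmat, h₁, h₂]

variable {ord : V → ℕ} {v w : V} {k h : ℕ}

lemma mfun_eq_card_of_ord_eq (hk : ∀ u, col v u = k → ord u = ord v) (hvw : ord v = ord w) :
    mfun col ord v w k h = #{u | col v u = k ∧ col u w = h} := by
  unfold mfun
  congr 1
  ext u
  simp only [mem_filter, mem_univ, true_and, and_iff_right_iff_imp]
  rintro ⟨hvu, -⟩
  rw [hk u hvu, ← hvw, min_self]

lemma mfun_diag_left_pos (hvw : ord v ≤ ord w) : 0 < mfun col ord v w (col v v) (col v w) :=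
  card_pos.2 ⟨v, by simp [hvw]⟩

lemma mfun_diag_right_pos (hwv : ord w ≤ ord v) : 0 < mfun col ord v w (col v w) (col w w) :=
  card_pos.2 ⟨w, by simp [hwv]⟩

variable (hloop : ∀ u v w : V, v ≠ w → col v w ≠ col u u)
include hloop

lemma mfun_diag_left_le_one (u : V) : mfun col ord v w (col u u) h ≤ 1 :=
  card_le_one.2 fun x hx y hy => by
    simp only [mem_filter] at hx hy
    rw [← eq_of_col_eq_col_diag hloop hx.2.2.1, ← eq_of_col_eq_col_diag hloop hy.2.2.1]

lemma mfun_diag_right_le_one (u : V) : mfun col ord v w k (col u u) ≤ 1 :=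
  card_le_one.2 fun x hx y hy => by
    simp only [mem_filter] at hx hy
    rw [eq_of_col_eq_col_diag hloop hx.2.2.2, eq_of_col_eq_col_diag hloop hy.2.2.2]

lemma col_diag_left_of_mfun_pos {u : V} (hpos : 0 < mfun col ord v w (col u u) h) :
    col v v = col u u := by
  obtain ⟨x, hx⟩ := card_pos.1 hpos
  obtain ⟨-, -, hvx, -⟩ := mem_filter.1 hx
  rwa [← eq_of_col_eq_col_diag hloop hvx] at hvx

lemma col_diag_right_of_mfun_pos {u : V} (hpos : 0 < mfun col ord v w k (col u u)) :
    col w w = col u u := by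
  obtain ⟨x, hx⟩ := card_pos.1 hpos
  obtain ⟨-, -, -, hxw⟩ := mem_filter.1 hx
  rwa [eq_of_col_eq_col_diag hloop hxw] at hxw

end TwoPaths

section Coherent

variable {V : Type*} [Fintype V] [DecidableEq V] {G : SimpleGraph V} {col : V → V → ℕ}
  {ord : V → ℕ}

/-- By (M1), `{v,w}` has as many `(col a a, col a b)`- plus `(col a b, col a a)`-colored 2-paths
as `{a,b}`, namely two (through `a` and through `b`), and such 2-paths can only pass through
`v`, resp. `w`, with a loop of color `col a a` there. -/
lemma col_diag_eq_of_col_eq (hcol0 : ∀ v w : V, col v w = 0 ↔ ¬(v = w ∨ G.Adj v w))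
    (hord : ∀ v w : V, ord v = ord w ↔ col v v = col w w)
    (hloop : ∀ u v w : V, v ≠ w → col v w ≠ col u u)
    (hM1 : ∀ v w v' w' : V, (v = w ∨ G.Adj v w) → (v' = w' ∨ G.Adj v' w') →
      col v w = col v' w' → ∀ k h : ℕ, msym col ord v w k h = msym col ord v' w' k h)
    {a b v w : V} {c : ℕ} (hab : a = b ∨ G.Adj a b) (ha : col a a = c) (hb : col b b = c)
    (hvw : col v w = col a b) : col v v = c ∧ col w w = c := by
  subst ha
  have hvw_edge : v = w ∨ G.Adj v w := by
    by_contra hne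
    exact (hcol0 a b).1 (hvw ▸ (hcol0 v w).2 hne) hab
  have hord_ab : ord a = ord b := (hord a b).2 hb.symm
  have htwo : 2 ≤ msym col ord a b (col a a) (col a b) := by
    have hleft := mfun_diag_left_pos (col := col) hord_ab.le
    have hright := mfun_diag_right_pos (col := col) hord_ab.ge
    rw [hb] at hright
    unfold msym
    omega
  rw [← hM1 v w a b hvw_edge hab hvw] at htwo
  unfold msym at htwo
  have hleft := mfun_diag_left_le_one hloop (ord := ord) (v := v) (w := w) (h := col a b) a
  have hright := mfun_diag_right_le_one hloop (ord := ord) (v := v) (w := w) (k := col a b) a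
  have hpos_left : 0 < mfun col ord v w (col a a) (col a b) := by omega
  have hpos_right : 0 < mfun col ord v w (col a b) (col a a) := by omega
  exact ⟨col_diag_left_of_mfun_pos hloop hpos_left, col_diag_right_of_mfun_pos hloop hpos_right⟩

lemma Jmat_mul_isSymm (hord : ∀ v w : V, ord v = ord w ↔ col v v = col w w)
    (hM2 : ∀ v w : V, col v v = col w w →
      ∀ k h : ℕ, memF G col k → memF G col h →
        mfun col ord v w k h = mfun col ord w v k h)
    {k h c : ℕ} (hkF : memF G col k) (hhF : memF G col h)
    (hk : ∀ x y, col x y = k → col x x = c ∧ col y y = c)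
    (hh : ∀ x y, col x y = h → col x x = c ∧ col y y = c) :
    (Jmat col k * Jmat col h).IsSymm := by
  have hk_ord (x u : V) (hxu : col x u = k) : ord u = ord x :=
    (hord u x).2 ((hk x u hxu).2.trans (hk x u hxu).1.symm)
  refine IsSymm.ext fun w v => ?_
  rw [Jmat_mul_apply, Jmat_mul_apply]
  by_cases hvw : col v v = c ∧ col w w = c
  · have hord_vw : ord v = ord w := (hord v w).2 (hvw.1.trans hvw.2.symm)
    rw [← mfun_eq_card_of_ord_eq (hk_ord v) hord_vw,
      ← mfun_eq_card_of_ord_eq (hk_ord w) hord_vw.symm,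
      hM2 v w (hvw.1.trans hvw.2.symm) k h hkF hhF]
  · have hempty (x y : V) (hxy : ¬(col x x = c ∧ col y y = c)) :
        #{u | col x u = k ∧ col u y = h} = 0 :=
      card_eq_zero.2 <| filter_eq_empty_iff.2 fun u _ hu =>
        hxy ⟨(hk x u hu.1).1, (hh u y hu.2).2⟩
    rw [hempty v w hvw, hempty w v fun hwv => hvw hwv.symm]

end Coherent

theorem stmt15_general {V : Type*} [Fintype V] [DecidableEq V]
    (G : SimpleGraph V) (col : V → V → ℕ) (ord : V → ℕ)
    (hsym : ∀ v w : V, col v w = col w v)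
    (hcol0 : ∀ v w : V, col v w = 0 ↔ ¬(v = w ∨ G.Adj v w))
    (hord : ∀ v w : V, ord v = ord w ↔ col v v = col w w)
    (hloop : ∀ u v w : V, v ≠ w → col v w ≠ col u u)
    (hM1 : ∀ v w v' w' : V, (v = w ∨ G.Adj v w) → (v' = w' ∨ G.Adj v' w') →
      col v w = col v' w' →
      ∀ k h : ℕ, msym col ord v w k h = msym col ord v' w' k h)
    (hM2 : ∀ v w : V, col v v = col w w →
      ∀ k h : ℕ, memF G col k → memF G col h →
        mfun col ord v w k h = mfun col ord w v k h) :
    ∀ z a b a' b' : V, (a = b ∨ G.Adj a b) → (a' = b' ∨ G.Adj a' b') →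
      col a a = col z z → col b b = col z z → col a' a' = col z z → col b' b' = col z z →
      Jmat col (col a b) * Jmat col (col a' b') =
        Jmat col (col a' b') * Jmat col (col a b) := by
  intro z a b a' b' hab hab' ha hb ha' hb'
  have hclosed {a b : V} (hab : a = b ∨ G.Adj a b) (ha : col a a = col z z)
      (hb : col b b = col z z) (x y : V) (hxy : col x y = col a b) :
      col x x = col z z ∧ col y y = col z z :=
    col_diag_eq_of_col_eq hcol0 hord hloop hM1 hab ha hb hxy
  have hmemF {a b : V} (hab : a = b ∨ G.Adj a b) (ha : col a a = col z z)
      (hb : col b b = col z z) : memF G col (col a b) :=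
    ⟨a, b, hab, ha.trans hb.symm, rfl⟩
  exact (Matrix.commute_of_isSymm_of_isSymm_mul (Jmat_isSymm hsym _) (Jmat_isSymm hsym _)
    (Jmat_mul_isSymm hord hM2 (hmemF hab ha hb) (hmemF hab' ha' hb')
      (hclosed hab ha hb) (hclosed hab' ha' hb'))).eq

/-- If `(G,𝒞)` is a symmetric CER graph (a cpeo with respect to which
(M1) and (M2) hold), then for every vertex color class `V_i` (the class of a vertex
`z`) and all diagonal-block colors `k, h ∈ F_i` (represented by extended edges
`{a,b}` and `{a',b'}` inside the class of `z`), the indicator matrices commute: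
`J^k J^h = J^h J^k`. -/
theorem stmt15 {V : Type*} [Fintype V] [DecidableEq V]
    (G : SimpleGraph V) (col : V → V → ℕ) (ord : V → ℕ)
    (hsym : ∀ v w : V, col v w = col w v)
    (hcol0 : ∀ v w : V, col v w = 0 ↔ ¬(v = w ∨ G.Adj v w))
    (hord : ∀ v w : V, ord v = ord w ↔ col v v = col w w)
    (hloop : ∀ u v w : V, v ≠ w → col v w ≠ col u u)
    (hcpeo : ∀ v w w' : V, ord v ≤ ord w → ord v ≤ ord w' → w ≠ w' →
      G.Adj v w → G.Adj v w' → G.Adj w w')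
    (hM1 : ∀ v w v' w' : V, (v = w ∨ G.Adj v w) → (v' = w' ∨ G.Adj v' w') →
      col v w = col v' w' →
      ∀ k h : ℕ, msym col ord v w k h = msym col ord v' w' k h)
    (hM2 : ∀ v w : V, col v v = col w w →
      ∀ k h : ℕ, memF G col k → memF G col h →
        mfun col ord v w k h = mfun col ord w v k h) :
    ∀ z a b a' b' : V, (a = b ∨ G.Adj a b) → (a' = b' ∨ G.Adj a' b') →
      col a a = col z z → col b b = col z z → col a' a' = col z z → col b' b' = col z z →
      Jmat col (col a b) * Jmat col (col a' b') =
        Jmat col (col a' b') * Jmat col (col a b) :=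
  stmt15_general G col ord hsym hcol0 hord hloop hM1 hM2
end
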